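/- Let q = 3^r > 3, let t(x) = x + ∑_{k=0}^{q-2} x^k ∈ F_q[x], and let f̄_2(x_1,x_2) be the reduced form of t(x_1^{q-4} + x_2^{q-2}). Then the reduced form of t(f̄_2 + x_3^{q-2}) ∈ F_q[x_1,x_2,x_3] has total degree 3(q-2) (the maximum possible degree of an LPP in three variables). -/

import Mathlib

/-!
Over `𝔽_q`, `∑_c c ^ k` is `-1` for `k = q - 1` and `0` for every other `k < 2(q - 1)`. Expanding a
reduced polynomial `g` in `n` variables therefore gives, for `0 < dᵢ < q`,
`coeff d g = (-1)ⁿ ∑ₓ g(x) ∏ xᵢ ^ (q - 1 - dᵢ)`: `deg g ≤ n(q - 2)` as soon as the sums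
`∑ₓ g(x) xᵐ` vanish for all weights `|m| < n`, and `deg g ≥ n(q - 2)` as soon as
`∑ₓ g(x) x₁ ⋯ xₙ ≠ 0`.

As a function, `t` is the transposition `σ = (0 1)` and `x ^ (q - 2) = x⁻¹` (with `0⁻¹ = 0`), so
`g` computes `σ(σ(x₁⁻³ + x₂⁻¹) + x₃⁻¹)`. Since `c ↦ σ(y + c⁻¹)` permutes `𝔽_q`, a substitution kills
the sums of all weights `|m| < 3` except `(0, 1, 1)`. For the weights `(j, 1, 1)`, the identity
`∑_c σ(y + c⁻¹) c = -1 - y⁻¹ - (1 - y)⁻¹` and partial fractions give `2 ∑_a aʲ (((a³)⁻¹ - 1)⁻² - a⁶)`.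
In characteristic `3`, `(a³)⁻¹ - 1 = (a⁻¹ - 1)³`, and the substitution `a ↦ (a⁻¹ - 1)⁻¹` evaluates
this to `0` for `j = 0` and to `-2 = 1` for `j = 1`.
-/

open MvPolynomial Finset

theorem inv_pow_three_sub_one_inv {K : Type*} [Field K] (h3 : (3 : K) = 0) (a : K) :
    ((a ^ 3)⁻¹ - 1)⁻¹ = ((a⁻¹ - 1)⁻¹) ^ 3 := by
  rw [← inv_pow, show a⁻¹ ^ 3 - 1 = (a⁻¹ - 1) ^ 3 by
    linear_combination (a⁻¹ ^ 2 - a⁻¹) * h3, inv_pow]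

theorem sum_fin_three_arrow {M R : Type*} [Fintype M] [AddCommMonoid R] (f : (Fin 3 → M) → R) :
    ∑ x, f x = ∑ a, ∑ b, ∑ c, f ![a, b, c] := by
  rw [← Equiv.sum_comp (Fin.consEquiv fun _ => M), Fintype.sum_prod_type]
  refine sum_congr rfl fun a _ => ?_
  rw [← Equiv.sum_comp (piFinTwoEquiv fun _ => M).symm, Fintype.sum_prod_type]
  rfl

namespace FiniteField

section PowerSums

variable {F : Type*} [Field F] [Fintype F]

theorem sum_id_eq_zero (hq : 2 < Fintype.card F) : ∑ c : F, c = 0 := by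
  simpa using sum_pow_lt_card_sub_one F 1 (by omega)

theorem sum_inv_eq_zero (hq : 2 < Fintype.card F) : ∑ c : F, c⁻¹ = 0 :=
  (Equiv.sum_comp (Equiv.inv F) id).trans (sum_id_eq_zero hq)

theorem sum_mul_inv_self : ∑ c : F, c * c⁻¹ = -1 := by
  classical
  have h (c : F) : c * c⁻¹ = 1 - if c = 0 then 1 else 0 := by
    by_cases hc : c = 0 <;> simp [hc]
  simp [h, sum_sub_distrib]

theorem sum_pow_card_sub_one : ∑ c : F, c ^ (Fintype.card F - 1) = -1 := by
  classical
  have hq : 1 < Fintype.card F := Fintype.one_lt_card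
  have h (c : F) : c ^ (Fintype.card F - 1) = 1 - if c = 0 then 1 else 0 := by
    by_cases hc : c = 0
    · simp [hc, zero_pow (by omega : Fintype.card F - 1 ≠ 0)]
    · simp [hc, pow_card_sub_one_eq_one c hc]
  simp [h, sum_sub_distrib]

theorem three_eq_zero_of_card_eq_three_pow {r : ℕ} (hF : Fintype.card F = 3 ^ r) :
    (3 : F) = 0 := by
  have hcard := cast_card_eq_zero F
  rw [hF, Nat.cast_pow, Nat.cast_ofNat] at hcard
  refine pow_eq_zero_iff (fun hr => ?_) |>.mp hcard
  have : 1 < Fintype.card F := Fintype.one_lt_card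
  simp_all

theorem sum_pow_eq_ite {k : ℕ} (hk : k < 2 * (Fintype.card F - 1)) :
    ∑ c : F, c ^ k = if k = Fintype.card F - 1 then -1 else 0 := by
  rcases lt_trichotomy k (Fintype.card F - 1) with hlt | rfl | hgt
  · rw [if_neg hlt.ne, sum_pow_lt_card_sub_one F k hlt]
  · rw [if_pos rfl, sum_pow_card_sub_one]
  · have hred (c : F) : c ^ k = c ^ (k - Fintype.card F + 1) := by
      calc c ^ k = c ^ (k - Fintype.card F) * c ^ Fintype.card F := by
            rw [← pow_add, Nat.sub_add_cancel (by omega)]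
        _ = c ^ (k - Fintype.card F + 1) := by rw [pow_card, pow_succ]
    rw [if_neg hgt.ne', sum_congr rfl fun c _ => hred c, sum_pow_lt_card_sub_one F _ (by omega)]

theorem pow_card_sub_one_sub {k : ℕ} (hk₀ : k ≠ 0) (hk : k < Fintype.card F - 1) (c : F) :
    c ^ (Fintype.card F - 1 - k) = (c ^ k)⁻¹ := by
  rcases eq_or_ne c 0 with rfl | hc
  · rw [zero_pow hk₀, zero_pow (by omega), inv_zero]
  · refine eq_inv_of_mul_eq_one_left ?_
    rw [← pow_add, Nat.sub_add_cancel hk.le, pow_card_sub_one_eq_one c hc]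

theorem eval_X_add_sum_range_pow [DecidableEq F] (a : F) :
    (Polynomial.X + ∑ k ∈ range (Fintype.card F - 1), Polynomial.X ^ k).eval a =
      Equiv.swap 0 1 a := by
  have hq : 1 < Fintype.card F := Fintype.one_lt_card
  simp only [Polynomial.eval_add, Polynomial.eval_X, Polynomial.eval_finsetSum,
    Polynomial.eval_pow, Equiv.swap_apply_def]
  split_ifs with h0 h1
  · subst h0
    simp [zero_pow_eq]
    omega
  · subst h1
    simp [Nat.cast_sub hq.le]
  · rw [geom_sum_eq h1, pow_card_sub_one_eq_one a h0, sub_self, zero_div, add_zero]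

theorem sum_inv_sub_mul_inv_sub (hq : 3 < Fintype.card F) (a b : F) :
    ∑ v : F, (v - a)⁻¹ * (v - b)⁻¹ = 2 * ((a - b)⁻¹) ^ 2 := by
  classical
  rcases eq_or_ne a b with rfl | hab
  · rw [sub_self, inv_zero, zero_pow two_ne_zero, mul_zero,
      ← Equiv.sum_comp (Equiv.subRight a).symm]
    simpa [← mul_inv, ← pow_two] using
      (Equiv.sum_comp (Equiv.inv F) (· ^ 2)).trans (sum_pow_lt_card_sub_one F 2 (by omega))
  · have hsplit (v : F) : (v - a)⁻¹ * (v - b)⁻¹ = (a - b)⁻¹ * ((v - a)⁻¹ - (v - b)⁻¹) +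
        ((if v = a then ((a - b)⁻¹) ^ 2 else 0) + (if v = b then ((a - b)⁻¹) ^ 2 else 0)) := by
      by_cases hva : v = a
      · subst hva
        simp [hab, pow_two]
      by_cases hvb : v = b
      · subst hvb
        rw [← neg_sub a v, inv_neg]
        simp [hva, pow_two]
      have := sub_ne_zero.mpr hva
      have := sub_ne_zero.mpr hvb
      have := sub_ne_zero.mpr hab
      simp only [hva, hvb, if_false, add_zero]
      field_simp
      ring
    have hshift (c : F) : ∑ v : F, (v - c)⁻¹ = ∑ w : F, w⁻¹ :=
      Equiv.sum_comp (Equiv.subRight c) (·⁻¹)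
    rw [sum_congr rfl fun v _ => hsplit v, sum_add_distrib, ← mul_sum, sum_sub_distrib,
      hshift, hshift, sub_self, mul_zero, zero_add, sum_add_distrib, sum_ite_eq', sum_ite_eq',
      if_pos (mem_univ _), if_pos (mem_univ _)]
    ring

theorem sum_inv_inv_sub_one_pow {k : ℕ} (hk : k < Fintype.card F - 1) :
    ∑ a : F, ((a⁻¹ - 1)⁻¹) ^ k = 0 :=
  (Equiv.sum_comp ((Equiv.inv F).trans ((Equiv.subRight 1).trans (Equiv.inv F))) (· ^ k)).trans
    (sum_pow_lt_card_sub_one F k hk)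

theorem sum_mul_inv_inv_sub_one_pow_six (h3 : (3 : F) = 0) (hq : 7 < Fintype.card F) :
    ∑ a : F, a * ((a⁻¹ - 1)⁻¹) ^ 6 = -1 := by
  have hsubst : ∑ a : F, a * ((a⁻¹ - 1)⁻¹) ^ 6 = ∑ c : F, (c - 1) ^ 7 * c⁻¹ := by
    have hpoint (u : F) : (u⁻¹ + 1)⁻¹ * u ^ 6 = u ^ 7 * (u + 1)⁻¹ := by
      rcases eq_or_ne u 0 with rfl | hu
      · simp
      · rw [show u⁻¹ + 1 = u⁻¹ * (u + 1) by field_simp; ring, mul_inv, inv_inv]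
        ring
    rw [← Equiv.sum_comp ((Equiv.subRight 1).trans
      ((Equiv.inv F).trans ((Equiv.addRight 1).trans (Equiv.inv F))))]
    simp [hpoint]
  have hpoint (c : F) : (c - 1) ^ 7 * c⁻¹ = c ^ 6 - c ^ 5 + c ^ 3 - c ^ 2 + c * c⁻¹ - c⁻¹ := by
    rcases eq_or_ne c 0 with rfl | hc
    · simp
    · field_simp
      linear_combination (-2 * c ^ 6 + 7 * c ^ 5 - 12 * c ^ 4 + 12 * c ^ 3 - 7 * c ^ 2 + 2 * c) * h3
  simp only [hsubst, hpoint, sum_sub_distrib, sum_add_distrib, sum_mul_inv_self,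
    sum_inv_eq_zero (by omega : 2 < Fintype.card F),
    sum_pow_lt_card_sub_one F _ (by omega : 6 < Fintype.card F - 1),
    sum_pow_lt_card_sub_one F _ (by omega : 5 < Fintype.card F - 1),
    sum_pow_lt_card_sub_one F _ (by omega : 3 < Fintype.card F - 1),
    sum_pow_lt_card_sub_one F _ (by omega : 2 < Fintype.card F - 1)]
  ring

end PowerSums

section Reduced

variable {F : Type*} [Field F] [Fintype F] {ι : Type*} [Fintype ι] [DecidableEq ι]

theorem sum_prod_pow (k : ι → ℕ) :
    ∑ x : ι → F, ∏ i, x i ^ k i = ∏ i, ∑ c : F, c ^ k i :=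
  (Fintype.prod_sum fun i c => c ^ k i).symm

theorem coeff_eq_sum_eval_mul_prod_pow {g : MvPolynomial ι F}
    (hg : ∀ i, g.degreeOf i < Fintype.card F) {d : ι →₀ ℕ}
    (hd : ∀ i, 0 < d i ∧ d i < Fintype.card F) :
    g.coeff d = (-1) ^ Fintype.card ι *
      ∑ x : ι → F, eval x g * ∏ i, x i ^ (Fintype.card F - 1 - d i) := by
  have hq : 0 < Fintype.card F := Fintype.card_pos
  have hmonomial : ∀ e ∈ g.support, ∑ x : ι → F, ∏ i, x i ^ (e i + (Fintype.card F - 1 - d i))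
      = if e = d then (-1) ^ Fintype.card ι else 0 := by
    intro e he
    have he_lt i : e i < Fintype.card F := (degreeOf_lt_iff hq).mp (hg i) e he
    have hfactor i : ∑ c : F, c ^ (e i + (Fintype.card F - 1 - d i)) =
        if e i = d i then -1 else 0 := by
      have := he_lt i
      have := hd i
      rw [sum_pow_eq_ite (by omega)]
      exact if_congr (by omega) rfl rfl
    rw [sum_prod_pow, Finset.prod_congr rfl fun i _ => hfactor i]
    split_ifs with hed
    · simp [hed]
    · obtain ⟨i, hi⟩ : ∃ i, e i ≠ d i := by
        contrapose! hed
        exact Finsupp.ext hed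
      exact prod_eq_zero (mem_univ i) (if_neg hi)
  have hsum : ∑ x : ι → F, eval x g * ∏ i, x i ^ (Fintype.card F - 1 - d i) =
      g.coeff d * (-1) ^ Fintype.card ι := by
    simp_rw [eval_eq', sum_mul, mul_assoc, ← prod_mul_distrib, ← pow_add]
    rw [sum_comm]
    simp_rw [← mul_sum]
    rw [sum_congr rfl fun e he => by rw [hmonomial e he]]
    simp_rw [mul_ite, mul_zero]
    rw [sum_ite_eq']
    split_ifs with hmem
    · rfl
    · rw [notMem_support_iff.mp hmem, zero_mul]
  rw [hsum, mul_left_comm, ← mul_pow, neg_one_mul, neg_neg, one_pow, mul_one]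

theorem totalDegree_le_of_sum_eval_mul_prod_pow_eq_zero {g : MvPolynomial ι F}
    (hg : ∀ i, g.degreeOf i < Fintype.card F) (hι : Fintype.card ι < Fintype.card F)
    (h : ∀ m : ι → ℕ, ∑ i, m i < Fintype.card ι →
      ∑ x : ι → F, eval x g * ∏ i, x i ^ m i = 0) :
    g.totalDegree ≤ Fintype.card ι * (Fintype.card F - 2) := by
  have hq : 1 < Fintype.card F := Fintype.one_lt_card
  refine Finset.sup_le fun d hd => ?_
  by_contra! hdeg
  rw [Finsupp.sum_fintype _ _ fun _ => rfl] at hdeg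
  have hd_lt i : d i < Fintype.card F := (degreeOf_lt_iff (by omega)).mp (hg i) d hd
  set m : ι → ℕ := fun i => Fintype.card F - 1 - d i
  have hm : ∑ i, m i + ∑ i, d i = Fintype.card ι * (Fintype.card F - 1) := by
    rw [← sum_add_distrib, sum_congr rfl fun i _ => Nat.sub_add_cancel (by have := hd_lt i; omega),
      sum_const, card_univ, smul_eq_mul]
  have hm_lt : ∑ i, m i < Fintype.card ι := by
    have : Fintype.card ι * (Fintype.card F - 1) = Fintype.card ι * (Fintype.card F - 2) +
        Fintype.card ι := by
      rw [← Nat.mul_succ]; congr 1; omega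
    omega
  have hd_pos i : 0 < d i := by
    have : m i ≤ ∑ j, m j := single_le_sum (fun j _ => Nat.zero_le (m j)) (mem_univ i)
    have : m i = Fintype.card F - 1 - d i := rfl
    omega
  exact mem_support_iff.mp hd <| by
    rw [coeff_eq_sum_eval_mul_prod_pow hg fun i => ⟨hd_pos i, hd_lt i⟩, h m hm_lt, mul_zero]

theorem le_totalDegree_of_sum_eval_mul_prod_ne_zero {g : MvPolynomial ι F}
    (hg : ∀ i, g.degreeOf i < Fintype.card F)
    (h : ∑ x : ι → F, eval x g * ∏ i, x i ≠ 0) :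
    Fintype.card ι * (Fintype.card F - 2) ≤ g.totalDegree := by
  rcases Nat.eq_zero_or_pos (Fintype.card F - 2) with h0 | hpos
  · simp [h0]
  set d : ι →₀ ℕ := Finsupp.equivFunOnFinite.symm fun _ => Fintype.card F - 2
  have hcoeff : g.coeff d ≠ 0 := by
    rw [coeff_eq_sum_eval_mul_prod_pow hg fun _ => ⟨hpos, by simp [d]; omega⟩]
    simpa [d, show Fintype.card F - 1 - (Fintype.card F - 2) = 1 by omega] using h
  simpa [d, Finsupp.sum_fintype] using le_totalDegree (mem_support_iff.mpr hcoeff)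

end Reduced

section Lpp

variable {F : Type*} [Field F] [DecidableEq F]

/-- On `𝔽_q` this is `x ↦ t(y + x ^ (q - 2))`. -/
def swapAddInv (y : F) : Equiv.Perm F :=
  (Equiv.inv F).trans ((Equiv.addLeft y).trans (Equiv.swap 0 1))

@[simp]
theorem swapAddInv_apply (y c : F) : swapAddInv y c = Equiv.swap 0 1 (y + c⁻¹) := rfl

/-- The function computed by the reduced form of `t(f̄₂ + x₃ ^ (q - 2))`. -/
def lppThreeVars (x : Fin 3 → F) : F := swapAddInv (swapAddInv ((x 0 ^ 3)⁻¹) (x 1)) (x 2)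

variable [Fintype F]

theorem sum_swapAddInv (hq : 2 < Fintype.card F) (y : F) : ∑ c, swapAddInv y c = 0 :=
  (Equiv.sum_comp (swapAddInv y) id).trans (sum_id_eq_zero hq)

theorem sum_swapAddInv_mul_self (hq : 2 < Fintype.card F) (y : F) :
    ∑ c, swapAddInv y c * c = -1 - y⁻¹ - (1 - y)⁻¹ := by
  have hsubst : ∑ c, swapAddInv y c * c = ∑ v, Equiv.swap 0 1 v * (v - y)⁻¹ := by
    conv_rhs => rw [← Equiv.sum_comp (Equiv.addLeft y), ← Equiv.sum_comp (Equiv.inv F)]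
    simp
  have hswap (v : F) : Equiv.swap 0 1 v * (v - y)⁻¹ = v * (v - y)⁻¹ +
      (if v = 0 then (0 - y)⁻¹ else 0) - (if v = 1 then (1 - y)⁻¹ else 0) := by
    rw [Equiv.swap_apply_def]
    split_ifs with h0 h1 <;> simp_all
  have hid : ∑ v : F, v * (v - y)⁻¹ = -1 := by
    rw [← Equiv.sum_comp (Equiv.addRight y)]
    simp only [Equiv.coe_addRight, add_sub_cancel_right, add_mul, sum_add_distrib,
      sum_mul_inv_self, ← mul_sum, sum_inv_eq_zero hq, mul_zero, add_zero]
  rw [hsubst, sum_congr rfl fun v _ => hswap v, sum_sub_distrib, sum_add_distrib, hid,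
    sum_ite_eq', sum_ite_eq', if_pos (mem_univ _), if_pos (mem_univ _), zero_sub, inv_neg]
  ring

theorem sum_swapAddInv_swap_mul_self (hq : 2 < Fintype.card F) (y : F) :
    ∑ c, swapAddInv (Equiv.swap 0 1 y) c * c = ∑ c, swapAddInv y c * c := by
  rw [sum_swapAddInv_mul_self hq, sum_swapAddInv_mul_self hq, Equiv.swap_apply_def]
  split_ifs with h0 h1 <;> simp [*]

theorem sum_mul_sum_swapAddInv_swapAddInv_mul_self (hq : 3 < Fintype.card F) (y : F) :
    ∑ b, b * ∑ c, swapAddInv (swapAddInv y b) c * c = 2 * (((y - 1)⁻¹) ^ 2 - (y⁻¹) ^ 2) := by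
  have hsubst : ∑ b, b * ∑ c, swapAddInv (swapAddInv y b) c * c =
      ∑ v, (v - y)⁻¹ * ∑ c, swapAddInv v c * c := by
    simp_rw [swapAddInv_apply y, sum_swapAddInv_swap_mul_self (by omega : 2 < Fintype.card F)]
    conv_rhs => rw [← Equiv.sum_comp (Equiv.addLeft y), ← Equiv.sum_comp (Equiv.inv F)]
    simp
  have hexpand (v : F) : (v - y)⁻¹ * ∑ c, swapAddInv v c * c =
      -(v - y)⁻¹ - (v - y)⁻¹ * (v - 0)⁻¹ + (v - y)⁻¹ * (v - 1)⁻¹ := by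
    rw [sum_swapAddInv_mul_self (by omega), ← neg_sub v 1, inv_neg, sub_zero]
    ring
  have hshift : ∑ v : F, (v - y)⁻¹ = 0 :=
    (Equiv.sum_comp (Equiv.subRight y) (·⁻¹)).trans (sum_inv_eq_zero (by omega))
  rw [hsubst, sum_congr rfl fun v _ => hexpand v, sum_add_distrib, sum_sub_distrib, sum_neg_distrib,
    hshift, sum_inv_sub_mul_inv_sub hq, sum_inv_sub_mul_inv_sub hq, sub_zero]
  ring

theorem sum_mul_sum_swapAddInv_inv_pow_three (h3 : (3 : F) = 0) (hq : 3 < Fintype.card F)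
    (a : F) : ∑ b, b * ∑ c, swapAddInv (swapAddInv ((a ^ 3)⁻¹) b) c * c =
      2 * (((a⁻¹ - 1)⁻¹) ^ 6 - a ^ 6) := by
  rw [sum_mul_sum_swapAddInv_swapAddInv_mul_self hq, inv_pow_three_sub_one_inv h3, inv_inv,
    ← pow_mul, ← pow_mul]

theorem sum_lppThreeVars_mul_prod_pow (m : Fin 3 → ℕ) :
    ∑ x : Fin 3 → F, lppThreeVars x * ∏ i, x i ^ m i =
      ∑ a : F, a ^ m 0 * ∑ b, b ^ m 1 * ∑ c, swapAddInv (swapAddInv ((a ^ 3)⁻¹) b) c * c ^ m 2 := by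
  rw [sum_fin_three_arrow]
  simp only [mul_sum]
  refine sum_congr rfl fun a _ => sum_congr rfl fun b _ => sum_congr rfl fun c _ => ?_
  simp only [lppThreeVars, Fin.prod_univ_three, Matrix.cons_val_zero, Matrix.cons_val_one,
    Matrix.cons_val_two, Matrix.head_cons, Matrix.tail_cons]
  ring

theorem sum_lppThreeVars_mul_prod_pow_eq_zero (h3 : (3 : F) = 0) (hq : 7 < Fintype.card F)
    (m : Fin 3 → ℕ) (hm : ∑ i, m i < 3) :
    ∑ x : Fin 3 → F, lppThreeVars x * ∏ i, x i ^ m i = 0 := by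
  rw [Fin.sum_univ_three] at hm
  rw [sum_lppThreeVars_mul_prod_pow]
  rcases (by omega : m 2 = 0 ∨ m 1 = 0 ∨ m 0 = 0 ∧ m 1 = 1 ∧ m 2 = 1) with
    h2 | h1 | ⟨h0, h1, h2⟩
  · simp only [h2, pow_zero, mul_one, sum_swapAddInv (by omega : 2 < Fintype.card F), mul_zero,
      sum_const_zero]
  · simp_rw [h1, pow_zero, one_mul,
      Equiv.sum_comp (swapAddInv _) fun v => ∑ c, swapAddInv v c * c ^ m 2, ← sum_mul,
      sum_pow_lt_card_sub_one F (m 0) (by omega), zero_mul]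
  · simp_rw [h0, h1, h2, pow_zero, pow_one, one_mul,
      sum_mul_sum_swapAddInv_inv_pow_three h3 (by omega), ← mul_sum, sum_sub_distrib,
      sum_inv_inv_sub_one_pow (by omega : 6 < Fintype.card F - 1),
      sum_pow_lt_card_sub_one F 6 (by omega), sub_self, mul_zero]

theorem sum_lppThreeVars_mul_prod_eq_one (h3 : (3 : F) = 0) (hq : 8 < Fintype.card F) :
    ∑ x : Fin 3 → F, lppThreeVars x * ∏ i, x i = 1 := by
  have hsum := sum_lppThreeVars_mul_prod_pow (F := F) fun _ => 1
  simp only [pow_one] at hsum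
  simp_rw [hsum, sum_mul_sum_swapAddInv_inv_pow_three h3 (by omega), mul_left_comm _ (2 : F),
    ← mul_sum, mul_sub, sum_sub_distrib, sum_mul_inv_inv_sub_one_pow_six h3 (by omega), ← pow_succ']
  rw [sum_pow_lt_card_sub_one F 7 (by omega)]
  linear_combination (-1 : F) * h3

end Lpp

end FiniteField

open FiniteField

theorem lpp_three_vars_char3_general {r : ℕ}
    {F : Type*} [Field F] [Fintype F] [DecidableEq F]
    (hF : Fintype.card F = 3 ^ r) (hq : 3 < Fintype.card F)
    (t : Polynomial F)
    (ht : t = Polynomial.X + ∑ k ∈ Finset.range (Fintype.card F - 1), Polynomial.X ^ k)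
    (f₂ : MvPolynomial (Fin 2) F)
    (heq₂ : ∀ x : Fin 2 → F, eval x f₂ =
      Polynomial.eval ((x 0) ^ (Fintype.card F - 4) + (x 1) ^ (Fintype.card F - 2)) t)
    (g : MvPolynomial (Fin 3) F)
    (hredg : ∀ i : Fin 3, g.degreeOf i < Fintype.card F)
    (heqg : ∀ x : Fin 3 → F, eval x g =
      Polynomial.eval ((eval ![x 0, x 1] f₂) + (x 2) ^ (Fintype.card F - 2)) t) :
    g.totalDegree = 3 * (Fintype.card F - 2) := by
  have hr : 2 ≤ r := by
    by_contra! hr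
    interval_cases r <;> simp_all
  have hq9 : 9 ≤ Fintype.card F := hF ▸ Nat.pow_le_pow_right three_pos hr
  have h3 : (3 : F) = 0 := three_eq_zero_of_card_eq_three_pow hF
  have ht' (a : F) : t.eval a = Equiv.swap 0 1 a := ht ▸ eval_X_add_sum_range_pow a
  have hg (x : Fin 3 → F) : eval x g = lppThreeVars x := by
    rw [heqg, heq₂, ht', ht', show Fintype.card F - 2 = Fintype.card F - 1 - 1 by omega,
      show Fintype.card F - 4 = Fintype.card F - 1 - 3 by omega,
      pow_card_sub_one_sub one_ne_zero (by omega), pow_card_sub_one_sub one_ne_zero (by omega),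
      pow_card_sub_one_sub three_ne_zero (by omega)]
    simp [lppThreeVars]
  apply le_antisymm
  · have hlow (m : Fin 3 → ℕ) (hm : ∑ i, m i < Fintype.card (Fin 3)) :
        ∑ x, eval x g * ∏ i, x i ^ m i = 0 := by
      simpa only [hg] using
        sum_lppThreeVars_mul_prod_pow_eq_zero h3 (by omega) m (by simpa using hm)
    simpa using totalDegree_le_of_sum_eval_mul_prod_pow_eq_zero hredg (by simpa using hq) hlow
  · have htop : ∑ x, eval x g * ∏ i, x i ≠ 0 := by
      simp [hg, sum_lppThreeVars_mul_prod_eq_one h3 (by omega)]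
    simpa using le_totalDegree_of_sum_eval_mul_prod_ne_zero hredg htop

/-- For `q = 3^r > 3`, `t(x) = x + ∑_{k=0}^{q-2} x^k` and `f̄₂` the reduced form of
`t(x₁^{q-4} + x₂^{q-2})`, the reduced form `g` of `t(f̄₂ + x₃^{q-2})` has total degree
`3(q-2)`. -/
theorem lpp_three_vars_char3 {r : ℕ}
    {F : Type*} [Field F] [Fintype F] [DecidableEq F]
    (hF : Fintype.card F = 3 ^ r) (hq : 3 < Fintype.card F)
    (t : Polynomial F)
    (ht : t = Polynomial.X + ∑ k ∈ Finset.range (Fintype.card F - 1), Polynomial.X ^ k)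
    (f₂ : MvPolynomial (Fin 2) F)
    (hred₂ : ∀ i : Fin 2, f₂.degreeOf i < Fintype.card F)
    (heq₂ : ∀ x : Fin 2 → F, eval x f₂ =
      Polynomial.eval ((x 0) ^ (Fintype.card F - 4) + (x 1) ^ (Fintype.card F - 2)) t)
    (g : MvPolynomial (Fin 3) F)
    (hredg : ∀ i : Fin 3, g.degreeOf i < Fintype.card F)
    (heqg : ∀ x : Fin 3 → F, eval x g =
      Polynomial.eval ((eval ![x 0, x 1] f₂) + (x 2) ^ (Fintype.card F - 2)) t) :
    g.totalDegree = 3 * (Fintype.card F - 2) :=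
  lpp_three_vars_char3_general hF hq t ht f₂ heq₂ g hredg heqg
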